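/- For the symmetric group S_n with Coxeter generators s_1,...,s_{n-1} (adjacent transpositions), define t_i := s_i s_{i-1} ... s_1 for 1 ≤ i ≤ n-1 (and t_0 := identity). Every permutation π ∈ S_n has a unique representation π = t_{n-1}^{k_{n-1}} t_{n-2}^{k_{n-2}} ... t_1^{k_1} with 0 ≤ k_i ≤ i for all i, and for this representation one has maj(π) = k_1 + k_2 + ... + k_{n-1}, where maj(π) is the sum of all indices 1 ≤ i < n with π(i) > π(i+1). -/

import Mathlib

/-! Number points from `0`. Left multiplication by `t_m` lowers the values `1, …, m` by one and
sends `0` to `m`. If `π` fixes every point `> m`, then `t_m ^ j` with `j = m - π(m)` is the only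
power with `j ≤ m` sending `m` to `π(m)`, and `(t_m ^ j)⁻¹ π` fixes every point `≥ m`; peeling
off factors this way gives existence and uniqueness of the exponents. For the major index: as long
as the position `m` does not carry the value `0`, applying `t_m` moves the descent just in front of
the entry `0` one step to the right and leaves all other descents alone, so each factor `t_m` adds
exactly one to `maj`. -/

namespace SymMaj

/-- `sP i` is the adjacent transposition `s_i = (i, i+1)` (1-indexed),
i.e. the swap of the 0-indexed positions `i-1` and `i`; junk value `1` outside range. -/
def sP {n : ℕ} (i : ℕ) : Equiv.Perm (Fin n) :=
  if h : 0 < i ∧ i < n then Equiv.swap ⟨i - 1, by omega⟩ ⟨i, h.2⟩ else 1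

/-- `tP i = s_i * s_{i-1} * ⋯ * s_1`; in particular `tP 0 = 1`. -/
def tP {n : ℕ} (i : ℕ) : Equiv.Perm (Fin n) :=
  ((List.range i).map (fun j => (sP (i - j) : Equiv.Perm (Fin n)))).prod

/-- `repP k = tP (n-1) ^ k (n-1) * ⋯ * tP 1 ^ k 1 * tP 0 ^ k 0`. -/
def repP {n : ℕ} (k : Fin n → ℕ) : Equiv.Perm (Fin n) :=
  (List.ofFn (fun i : Fin n => (tP (i : ℕ) : Equiv.Perm (Fin n)) ^ k i)).reverse.prod

/-- The major index: sum of all 1-indexed `i`, `1 ≤ i < n`, with `π(i) > π(i+1)`. -/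
def majP {n : ℕ} (π : Equiv.Perm (Fin n)) : ℕ :=
  ∑ i ∈ Finset.range n, if h : i + 1 < n then
    (if π ⟨i + 1, h⟩ < π ⟨i, by omega⟩ then i + 1 else 0) else 0

open Equiv Finset

variable {n : ℕ}

lemma coe_sP_apply {i : ℕ} (h0 : 0 < i) (hi : i < n) (x : Fin n) :
    (sP i x : ℕ) = if (x : ℕ) = i - 1 then i else if (x : ℕ) = i then i - 1 else x := by
  rw [sP, dif_pos ⟨h0, hi⟩, swap_apply_def]
  simp only [Fin.ext_iff, apply_ite Fin.val]

lemma tP_zero : (tP 0 : Perm (Fin n)) = 1 := by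
  simp [tP]

lemma tP_succ (i : ℕ) : (tP (i + 1) : Perm (Fin n)) = sP (i + 1) * tP i := by
  unfold tP
  rw [List.range_succ_eq_map, List.map_cons, List.map_map, List.prod_cons]
  simp [Function.comp_def, Nat.succ_sub_succ]

lemma coe_tP_apply {m : ℕ} (hm : m < n) (x : Fin n) :
    (tP m x : ℕ) = if (x : ℕ) = 0 then m else if (x : ℕ) ≤ m then x - 1 else x := by
  induction m with
  | zero => rw [tP_zero, Perm.one_apply]; split_ifs <;> omega
  | succ m ih =>
    rw [tP_succ, Perm.mul_apply, coe_sP_apply (by omega) hm, ih (by omega)]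
    split_ifs <;> omega

lemma tP_lt_tP_iff {m : ℕ} (hm : m < n) {x y : Fin n} (hx : (x : ℕ) ≠ 0) (hy : (y : ℕ) ≠ 0) :
    tP m x < tP m y ↔ x < y := by
  rw [Fin.lt_def, Fin.lt_def, coe_tP_apply hm, coe_tP_apply hm]
  split_ifs <;> omega

lemma coe_tP_pow_apply_self {m k : ℕ} (hm : m < n) (hk : k ≤ m) :
    ((tP m ^ k) ⟨m, hm⟩ : ℕ) = m - k := by
  induction k with
  | zero => simp
  | succ k ih =>
    rw [pow_succ', Perm.mul_apply, coe_tP_apply hm, ih (by omega)]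
    split_ifs <;> omega

abbrev fixingFrom (m : ℕ) : Subgroup (Perm (Fin n)) :=
  fixingSubgroup (Perm (Fin n)) {x : Fin n | m ≤ (x : ℕ)}

lemma mem_fixingFrom {m : ℕ} {σ : Perm (Fin n)} :
    σ ∈ fixingFrom m ↔ ∀ x : Fin n, m ≤ (x : ℕ) → σ x = x := by
  simp [mem_fixingSubgroup_iff]

lemma fixingFrom_mono {m m' : ℕ} (h : m ≤ m') :
    (fixingFrom m : Subgroup (Perm (Fin n))) ≤ fixingFrom m' :=
  fixingSubgroup_antitone _ _ fun x (hx : m' ≤ (x : ℕ)) => show m ≤ (x : ℕ) by omega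

lemma apply_lt_of_mem_fixingFrom {m : ℕ} {σ : Perm (Fin n)} (hσ : σ ∈ fixingFrom m) {x : Fin n}
    (hx : (x : ℕ) < m) : (σ x : ℕ) < m := by
  by_contra! h
  have := σ.injective (mem_fixingFrom.1 hσ (σ x) h)
  omega

lemma tP_mem_fixingFrom (m : ℕ) : (tP m : Perm (Fin n)) ∈ fixingFrom (m + 1) :=
  mem_fixingFrom.2 fun x hx => Fin.ext <| by
    rw [coe_tP_apply (by omega)]
    split_ifs <;> omega

/-- Positions are 0-indexed: `IsDescent σ i` is the descent `i + 1` of the paper, contributing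
`i + 1` to the major index. -/
def IsDescent (σ : Perm (Fin n)) (i : ℕ) : Prop :=
  ∃ h : i + 1 < n, σ ⟨i + 1, h⟩ < σ ⟨i, by omega⟩

instance (σ : Perm (Fin n)) : DecidablePred (IsDescent σ) := fun _ => by
  unfold IsDescent; infer_instance

lemma isDescent_iff {σ : Perm (Fin n)} {i : ℕ} (h : i + 1 < n) :
    IsDescent σ i ↔ (σ ⟨i + 1, h⟩ : ℕ) < σ ⟨i, by omega⟩ :=
  ⟨fun ⟨_, hd⟩ => hd, fun hd => ⟨h, hd⟩⟩

lemma majP_eq_sum_isDescent (σ : Perm (Fin n)) :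
    majP σ = ∑ i ∈ range n, if IsDescent σ i then i + 1 else 0 :=
  sum_congr rfl fun i _ => by by_cases h : i + 1 < n <;> simp [IsDescent, h]

lemma majP_one : majP (1 : Perm (Fin n)) = 0 := by
  simp [majP_eq_sum_isDescent, IsDescent]

lemma sum_range_ite_add_one_eq {p : ℕ} (hp : p ≤ n) :
    ∑ i ∈ range n, (if i + 1 = p then i + 1 else 0) = p := by
  have h := sum_range_succ' (fun j => if j = p then j else 0) n
  rw [sum_ite_eq', if_pos (mem_range.2 (by omega))] at h
  simpa using h.symm

lemma majP_eq_add_one_of_descent_shift {π τ : Perm (Fin n)} {p : ℕ}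
    (hπp : IsDescent π p) (hτp : ¬IsDescent τ p)
    (hprev : ∀ i, i + 1 = p → ¬IsDescent π i ∧ IsDescent τ i)
    (hother : ∀ i, i ≠ p → i + 1 ≠ p → (IsDescent π i ↔ IsDescent τ i)) :
    majP π = majP τ + 1 := by
  have hpn : p + 1 < n := hπp.1
  have key : ∀ i ∈ range n,
      (if IsDescent π i then i + 1 else 0) + (if i + 1 = p then i + 1 else 0) =
        (if IsDescent τ i then i + 1 else 0) + (if i = p then i + 1 else 0) := by
    intro i _
    by_cases hi : i = p
    · subst hi; simp [hπp, hτp]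
    by_cases hi' : i + 1 = p
    · simp [hprev i hi', hi, hi']
    · simp [hother i hi hi', hi, hi']
  have hsum := sum_congr rfl key
  rw [sum_add_distrib, sum_add_distrib, sum_range_ite_add_one_eq (by omega), sum_ite_eq',
    if_pos (mem_range.2 (by omega)), ← majP_eq_sum_isDescent, ← majP_eq_sum_isDescent] at hsum
  omega

lemma majP_tP_mul {m : ℕ} (hm : m < n) {τ : Perm (Fin n)} (hτ : τ ∈ fixingFrom (m + 1))
    (hτm : (τ ⟨m, hm⟩ : ℕ) ≠ 0) : majP (tP m * τ) = majP τ + 1 := by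
  obtain ⟨p, hp⟩ : ∃ p : Fin n, (τ p : ℕ) = 0 := ⟨τ.symm ⟨0, by omega⟩, by simp⟩
  have hne : ∀ i (hi : i < n), i ≠ p → (τ ⟨i, hi⟩ : ℕ) ≠ 0 := fun i hi hip h =>
    hip (congrArg Fin.val (τ.injective (Fin.ext (h.trans hp.symm))))
  have hle : ∀ x : Fin n, (x : ℕ) ≤ m → (τ x : ℕ) ≤ m := fun x hx =>
    Nat.le_of_lt_succ (apply_lt_of_mem_fixingFrom hτ (by omega))
  have hpm : (p : ℕ) < m := by
    by_contra! h
    rcases h.eq_or_lt with h | h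
    · exact hτm (by rw [show (⟨m, hm⟩ : Fin n) = p from Fin.ext h, hp])
    · rw [mem_fixingFrom.1 hτ p h] at hp
      omega
  have hpn : (p : ℕ) + 1 < n := by omega
  refine majP_eq_add_one_of_descent_shift (p := p) ?_ ?_ ?_ ?_
  · have h1 := hle ⟨p + 1, hpn⟩ (show p + 1 ≤ m by omega)
    have h2 := hne (p + 1) hpn (by omega)
    rw [isDescent_iff hpn, Perm.mul_apply, Perm.mul_apply, coe_tP_apply hm, coe_tP_apply hm]
    simp only [Fin.eta, hp]
    split_ifs <;> omega
  · rw [isDescent_iff hpn]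
    simp [hp]
  · intro i hi
    have hin : i + 1 < n := by omega
    obtain rfl : p = ⟨i + 1, hin⟩ := Fin.ext hi.symm
    have h1 := hle ⟨i, by omega⟩ (show i ≤ m by omega)
    have h2 := hne i (by omega) (by simp)
    rw [isDescent_iff hin, isDescent_iff hin, Perm.mul_apply, Perm.mul_apply, coe_tP_apply hm,
      coe_tP_apply hm]
    simp only [hp]
    split_ifs <;> omega
  · intro i hip hip'
    by_cases hi : i + 1 < n
    · rw [isDescent_iff hi, isDescent_iff hi, Perm.mul_apply, Perm.mul_apply,
        ← Fin.lt_def, ← Fin.lt_def,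
        tP_lt_tP_iff hm (hne _ hi (by omega)) (hne _ (by omega) hip)]
    · exact ⟨fun h => absurd h.1 hi, fun h => absurd h.1 hi⟩

lemma majP_tP_pow_mul {m k : ℕ} (hm : m < n) {σ : Perm (Fin n)} (hσ : σ ∈ fixingFrom m)
    (hk : k ≤ m) : majP (tP m ^ k * σ) = majP σ + k := by
  induction k with
  | zero => simp
  | succ k ih =>
    rw [pow_succ', mul_assoc, majP_tP_mul hm, ih (by omega), add_assoc]
    · exact mul_mem (pow_mem (tP_mem_fixingFrom m) k) (fixingFrom_mono (by omega) hσ)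
    · rw [Perm.mul_apply, mem_fixingFrom.1 hσ _ le_rfl, coe_tP_pow_apply_self hm (by omega)]
      omega

def partialRep (k : ℕ → ℕ) (m : ℕ) : Perm (Fin n) :=
  ((List.range m).map fun j => tP j ^ k j).reverse.prod

lemma partialRep_zero (k : ℕ → ℕ) : (partialRep k 0 : Perm (Fin n)) = 1 := by
  simp [partialRep]

lemma partialRep_succ (k : ℕ → ℕ) (m : ℕ) :
    (partialRep k (m + 1) : Perm (Fin n)) = tP m ^ k m * partialRep k m := by
  simp [partialRep, List.range_succ]

lemma partialRep_congr {k k' : ℕ → ℕ} {m : ℕ} (h : ∀ i < m, k i = k' i) :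
    (partialRep k m : Perm (Fin n)) = partialRep k' m := by
  unfold partialRep
  rw [List.map_congr_left fun i hi => by rw [h i (List.mem_range.1 hi)]]

lemma repP_eq_partialRep (k : Fin n → ℕ) :
    repP k = partialRep (fun j => if h : j < n then k ⟨j, h⟩ else 0) n := by
  unfold repP partialRep
  congr 2
  apply List.ext_getElem (by simp)
  intro i h _
  simp only [List.length_ofFn] at h
  simp [h]

lemma partialRep_mem_fixingFrom (k : ℕ → ℕ) (m : ℕ) :
    (partialRep k m : Perm (Fin n)) ∈ fixingFrom m := by
  induction m with
  | zero => exact mem_fixingFrom.2 fun x _ => by rw [partialRep_zero]; rfl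
  | succ m ih =>
    rw [partialRep_succ]
    exact mul_mem (pow_mem (tP_mem_fixingFrom m) _) (fixingFrom_mono (by omega) ih)

lemma coe_partialRep_succ_apply_self {k : ℕ → ℕ} {m : ℕ} (hm : m < n) (hk : k m ≤ m) :
    ((partialRep k (m + 1) : Perm (Fin n)) ⟨m, hm⟩ : ℕ) = m - k m := by
  rw [partialRep_succ, Perm.mul_apply, mem_fixingFrom.1 (partialRep_mem_fixingFrom k m) _ le_rfl,
    coe_tP_pow_apply_self hm hk]

lemma majP_partialRep {k : ℕ → ℕ} {m : ℕ} (hm : m ≤ n) (hk : ∀ i < m, k i ≤ i) :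
    majP (partialRep k m : Perm (Fin n)) = ∑ i ∈ range m, k i := by
  induction m with
  | zero => rw [partialRep_zero, majP_one, sum_range_zero]
  | succ m ih =>
    rw [partialRep_succ, majP_tP_pow_mul hm (partialRep_mem_fixingFrom k m) (hk m (by omega)),
      ih (by omega) (fun i hi => hk i (by omega)), sum_range_succ]

lemma eq_of_partialRep_eq {k k' : ℕ → ℕ} {m : ℕ} (hm : m ≤ n) (hk : ∀ i < m, k i ≤ i)
    (hk' : ∀ i < m, k' i ≤ i) (h : (partialRep k m : Perm (Fin n)) = partialRep k' m) :
    ∀ i < m, k i = k' i := by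
  induction m with
  | zero => simp
  | succ m ih =>
    have htop : k m = k' m := by
      have := congrArg (fun σ : Perm (Fin n) => (σ ⟨m, hm⟩ : ℕ)) h
      simp only [coe_partialRep_succ_apply_self hm (hk m (by omega)),
        coe_partialRep_succ_apply_self hm (hk' m (by omega))] at this
      have := hk m (by omega)
      have := hk' m (by omega)
      omega
    rw [partialRep_succ, partialRep_succ, htop] at h
    have hrest := ih (by omega) (fun i hi => hk i (by omega)) (fun i hi => hk' i (by omega))
      (mul_left_cancel h)
    intro i hi
    rcases Nat.lt_succ_iff_lt_or_eq.1 hi with hi | rfl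
    · exact hrest i hi
    · exact htop

lemma exists_partialRep_eq {m : ℕ} (hm : m ≤ n) {σ : Perm (Fin n)} (hσ : σ ∈ fixingFrom m) :
    ∃ k : ℕ → ℕ, (∀ i, k i ≤ i) ∧ σ = partialRep k m := by
  induction m generalizing σ with
  | zero =>
    refine ⟨fun _ => 0, fun i => Nat.zero_le i, ?_⟩
    rw [partialRep_zero]
    exact Perm.ext fun x => mem_fixingFrom.1 hσ x (Nat.zero_le _)
  | succ m ih =>
    have hmn : m < n := hm
    have hσm : (σ ⟨m, hmn⟩ : ℕ) ≤ m :=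
      Nat.le_of_lt_succ (apply_lt_of_mem_fixingFrom hσ (by simp))
    set j := m - (σ ⟨m, hmn⟩ : ℕ)
    have hρ : (tP m ^ j)⁻¹ * σ ∈ fixingFrom m := by
      have hρ' : (tP m ^ j)⁻¹ * σ ∈ fixingFrom (m + 1) :=
        mul_mem (inv_mem (pow_mem (tP_mem_fixingFrom m) j)) hσ
      refine mem_fixingFrom.2 fun x hx => ?_
      rcases hx.eq_or_lt with hx | hx
      · obtain rfl : x = ⟨m, hmn⟩ := Fin.ext hx.symm
        rw [Perm.mul_apply, Perm.inv_eq_iff_eq]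
        exact Fin.ext (by rw [coe_tP_pow_apply_self hmn (by omega)]; omega)
      · exact mem_fixingFrom.1 hρ' x hx
    obtain ⟨k, hk, hρk⟩ := ih (by omega) hρ
    refine ⟨Function.update k m j, fun i => ?_, ?_⟩
    · rcases eq_or_ne i m with rfl | hi
      · simp only [Function.update_self]; omega
      · simpa [Function.update_of_ne hi] using hk i
    · rw [partialRep_succ, Function.update_self,
        partialRep_congr fun i hi => Function.update_of_ne hi.ne _ _, ← hρk, mul_inv_cancel_left]

/-- every `π ∈ S_n` has a unique representation
`π = t_{n-1}^{k_{n-1}} ⋯ t_1^{k_1}` with `0 ≤ k_i ≤ i`, and for this representation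
`maj(π) = k_1 + ⋯ + k_{n-1}`. -/
theorem flag_decomposition_gives_major (n : ℕ) (π : Equiv.Perm (Fin n)) :
    (∃! k : Fin n → ℕ, (∀ i : Fin n, k i ≤ (i : ℕ)) ∧ π = repP k) ∧
    (∀ k : Fin n → ℕ, (∀ i : Fin n, k i ≤ (i : ℕ)) → π = repP k →
      majP π = ∑ i : Fin n, k i) := by
  obtain ⟨K, hK, hπ⟩ := exists_partialRep_eq le_rfl
    (mem_fixingFrom.2 fun x hx => absurd x.isLt (by omega) : π ∈ fixingFrom n)
  have hagree : ∀ k : Fin n → ℕ, (∀ i : Fin n, k i ≤ (i : ℕ)) → π = repP k →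
      ∀ i : Fin n, k i = K i := by
    intro k hk hπk i
    rw [repP_eq_partialRep] at hπk
    have := eq_of_partialRep_eq le_rfl (fun j hj => by simpa [hj] using hk ⟨j, hj⟩)
      (fun j _ => hK j) (hπk.symm.trans hπ) i i.isLt
    simpa using this
  refine ⟨⟨fun i => K i, ⟨fun i => hK i, ?_⟩, fun k hk => funext (hagree k hk.1 hk.2)⟩, ?_⟩
  · rw [repP_eq_partialRep, hπ]
    exact partialRep_congr fun i hi => by simp [hi]
  · intro k hk hπk
    rw [hπ, majP_partialRep le_rfl fun i _ => hK i, ← Fin.sum_univ_eq_sum_range]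
    exact sum_congr rfl fun i _ => (hagree k hk hπk i).symm

end SymMaj
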